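/- Distinction soundness (Lemma 4): Let S be a labeled transition system with spectroscopy energy game G△ and attacker winning budgets Win_a. Every formula φ ∈ Strat([p,Q]_a, e) distinguishes p from every q ∈ Q, i.e., p ⊨ φ and q ⊭ φ for all q ∈ Q. -/

import Mathlib

/-! ### Energies and energy updates -/

/-- (Finite) energies: vectors in `ℕ^N`. -/
abbrev Energy (N : ℕ) := Fin N → ℕ

/-- Extended energies: vectors in `(ℕ ∪ {∞})^N`. -/
abbrev EnergyE (N : ℕ) := Fin N → ℕ∞

/-- Embedding of energies into extended energies. -/
def Energy.toE {N : ℕ} (e : Energy N) : EnergyE N := fun k => (e k : ℕ∞)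

/-- A component of an energy update: `-1`, `0`, or `min_D`. -/
inductive UpdComp (N : ℕ) : Type where
  | dec : UpdComp N
  | zero : UpdComp N
  | minOf (D : Finset (Fin N)) : UpdComp N
deriving DecidableEq

/-- An energy update: a vector of update components, where a `min_D`
component at index `k` must satisfy `k ∈ D`. -/
structure EnergyUpdate (N : ℕ) : Type where
  comp : Fin N → UpdComp N
  valid : ∀ k D, comp k = UpdComp.minOf D → k ∈ D

open Classical in
/-- Applying an energy update to an extended energy: component `k` becomes
`e k - 1`, `e k`, or `min_{d ∈ D} e d`; the result is undefined (`none`) if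
some component would become negative. -/
noncomputable def applyUpdE {N : ℕ} (e : EnergyE N) (u : EnergyUpdate N) :
    Option (EnergyE N) :=
  if ∀ k, u.comp k = UpdComp.dec → e k ≠ 0 then
    some (fun k =>
      match u.comp k with
      | UpdComp.dec => e k - 1
      | UpdComp.zero => e k
      | UpdComp.minOf D => (insert k D).inf' (Finset.insert_nonempty k D) e)
  else none

open Classical in
/-- Applying an energy update to a (finite) energy. -/
noncomputable def applyUpdN {N : ℕ} (e : Energy N) (u : EnergyUpdate N) :
    Option (Energy N) :=
  if ∀ k, u.comp k = UpdComp.dec → e k ≠ 0 then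
    some (fun k =>
      match u.comp k with
      | UpdComp.dec => e k - 1
      | UpdComp.zero => e k
      | UpdComp.minOf D => (insert k D).inf' (Finset.insert_nonempty k D) e)
  else none

/-! ### Declining energy games -/

/-- A declining `N`-dimensional energy game: positions (partitioned into defender
positions and attacker positions), moves, and a weight function assigning an
energy update to each move. -/
structure EnergyGame (N : ℕ) where
  Pos : Type
  defender : Pos → Prop
  move : Pos → Pos → Prop
  weight : Pos → Pos → EnergyUpdate N

/-- The attacker wins from position `g` with (extended) initial energy budget `e`:
inductive (attractor) characterization of the existence of an attacker winning
strategy.  (The attacker wins exactly the finite plays that get stuck at a defender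
position without the energy having become negative, so the attacker has a winning
strategy iff they can force the play into a stuck defender position in finitely
many steps while keeping all energy levels defined.) -/
inductive AttackerWins {N : ℕ} (G : EnergyGame N) : G.Pos → EnergyE N → Prop where
  | attack {g g' : G.Pos} {e e' : EnergyE N} :
      ¬ G.defender g → G.move g g' →
      applyUpdE e (G.weight g g') = some e' →
      AttackerWins G g' e' → AttackerWins G g e
  | defend {g : G.Pos} {e : EnergyE N} :
      G.defender g →
      (∀ g', G.move g g' → (applyUpdE e (G.weight g g')).isSome) →
      (∀ g' e', G.move g g' → applyUpdE e (G.weight g g') = some e' →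
        AttackerWins G g' e') →
      AttackerWins G g e
/-! ### The spectroscopy energy game -/

/-- Lifting of transition steps to sets of processes:
`stepSet step Q a = {q' | ∃ q ∈ Q, q →a q'}`. -/
def stepSet {P : Type} {Act : Type} (step : P → Act → P → Prop) (Q : Set P) (a : Act) :
    Set P := {q' | ∃ q ∈ Q, step q a q'}

/-- The actions enabled initially for a process `p`: `I(p)`. -/
def enabledActs {P : Type} {Act : Type} (step : P → Act → P → Prop) (p : P) : Set Act :=
  {a | ∃ p', step p a p'}

/-- Positions of the spectroscopy energy game: attacker positions `[p,Q]_a`,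
attacker clause positions `[p,q]_a^∧`, and defender positions `(p,Q,Q*)_d`. -/
inductive SpecPos (P : Type) : Type where
  | att (p : P) (Q : Set P)
  | attConj (p q : P)
  | defp (p : P) (Q Qs : Set P)

/-- Update `(-1,0,0,0,0,0)` of observation moves. -/
def uObs : EnergyUpdate 6 :=
  ⟨![.dec, .zero, .zero, .zero, .zero, .zero], by decide⟩

/-- Update `(0,-1,0,0,0,0)` of conjunction challenges. -/
def uConj : EnergyUpdate 6 :=
  ⟨![.zero, .dec, .zero, .zero, .zero, .zero], by decide⟩

/-- Update `(min_{1,3},0,0,0,0,0)` of conjunction revivals. -/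
def uRevival : EnergyUpdate 6 :=
  ⟨![.minOf {0, 2}, .zero, .zero, .zero, .zero, .zero], by decide⟩

/-- Update `(0,0,0,min_{3,4},0,0)` of conjunction answers. -/
def uAnswer : EnergyUpdate 6 :=
  ⟨![.zero, .zero, .zero, .minOf {2, 3}, .zero, .zero], by decide⟩

/-- Update `(min_{1,4},0,0,0,0,0)` of positive decisions. -/
def uPos : EnergyUpdate 6 :=
  ⟨![.minOf {0, 3}, .zero, .zero, .zero, .zero, .zero], by decide⟩

/-- Update `(min_{1,5},0,0,0,0,-1)` of negative decisions. -/
def uNeg : EnergyUpdate 6 :=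
  ⟨![.minOf {0, 4}, .zero, .zero, .zero, .zero, .dec], by decide⟩

/-- The moves of the spectroscopy energy game `G△`. -/
inductive SpecMove {P : Type} {Act : Type} (step : P → Act → P → Prop) :
    SpecPos P → SpecPos P → Prop where
  | obs {p p' : P} {Q : Set P} {a : Act} :
      step p a p' →
      SpecMove step (.att p Q) (.att p' (stepSet step Q a))
  | conjChallenge {p : P} {Q Qs : Set P} :
      Qs ⊆ Q →
      SpecMove step (.att p Q) (.defp p (Q \ Qs) Qs)
  | conjRevival {p : P} {Q Qs : Set P} :
      Qs ≠ ∅ →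
      SpecMove step (.defp p Q Qs) (.att p Qs)
  | conjAnswer {p q : P} {Q Qs : Set P} :
      q ∈ Q →
      SpecMove step (.defp p Q Qs) (.attConj p q)
  | posDecision {p q : P} :
      SpecMove step (.attConj p q) (.att p {q})
  | negDecision {p q : P} :
      p ≠ q →
      SpecMove step (.attConj p q) (.att q {p})

/-- The moves of the clever spectroscopy game `G▲`: like `SpecMove`, with conjunction
challenges restricted to the four subsets
`∅`, `{q ∈ Q | I(q) ⊆ I(p)}`, `{q ∈ Q | I(p) ⊆ I(q)}`, `{q ∈ Q | I(p) = I(q)}`. -/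
inductive CleverMove {P : Type} {Act : Type} (step : P → Act → P → Prop) :
    SpecPos P → SpecPos P → Prop where
  | obs {p p' : P} {Q : Set P} {a : Act} :
      step p a p' →
      CleverMove step (.att p Q) (.att p' (stepSet step Q a))
  | conjChallenge {p : P} {Q Qs : Set P} :
      (Qs = ∅ ∨
       Qs = {q ∈ Q | enabledActs step q ⊆ enabledActs step p} ∨
       Qs = {q ∈ Q | enabledActs step p ⊆ enabledActs step q} ∨
       Qs = {q ∈ Q | enabledActs step p = enabledActs step q}) →
      CleverMove step (.att p Q) (.defp p (Q \ Qs) Qs)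
  | conjRevival {p : P} {Q Qs : Set P} :
      Qs ≠ ∅ →
      CleverMove step (.defp p Q Qs) (.att p Qs)
  | conjAnswer {p q : P} {Q Qs : Set P} :
      q ∈ Q →
      CleverMove step (.defp p Q Qs) (.attConj p q)
  | posDecision {p q : P} :
      CleverMove step (.attConj p q) (.att p {q})
  | negDecision {p q : P} :
      p ≠ q →
      CleverMove step (.attConj p q) (.att q {p})

open Classical in
/-- The weight function of the spectroscopy energy game (well-defined on all moves). -/
noncomputable def specWeight {P : Type} : SpecPos P → SpecPos P → EnergyUpdate 6
  | .att _ _, .att _ _ => uObs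
  | .att _ _, .defp _ _ _ => uConj
  | .defp _ _ _, .att _ _ => uRevival
  | .defp _ _ _, .attConj _ _ => uAnswer
  | .attConj p _, .att p' _ => if p = p' then uPos else uNeg
  | _, _ => uObs

/-- The spectroscopy energy game `G△` of a labeled transition system. -/
noncomputable def specGame {P : Type} {Act : Type} (step : P → Act → P → Prop) :
    EnergyGame 6 where
  Pos := SpecPos P
  defender g := ∃ p Q Qs, g = SpecPos.defp p Q Qs
  move := SpecMove step
  weight := specWeight

/-- The clever spectroscopy energy game `G▲` of a labeled transition system. -/
noncomputable def cleverGame {P : Type} {Act : Type} (step : P → Act → P → Prop) :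
    EnergyGame 6 where
  Pos := SpecPos P
  defender g := ∃ p Q Qs, g = SpecPos.defp p Q Qs
  move := CleverMove step
  weight := specWeight
/-! ### Hennessy–Milner logic -/

/-- Hennessy–Milner logic over actions `Act`: observations `⟨a⟩φ` and finite
conjunctions `⋀ {ψ_i}` whose clauses are positive (`poss`) or negated (`negs`)
formulas. -/
inductive HML (Act : Type) : Type where
  | obs (a : Act) (φ : HML Act)
  | conj (poss : List (HML Act)) (negs : List (HML Act))

/-- HML semantics: `HML.sat step φ p` means `p ⊨ φ`. -/
def HML.sat {P : Type} {Act : Type} (step : P → Act → P → Prop) :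
    HML Act → P → Prop
  | .obs a φ, p => ∃ p', step p a p' ∧ HML.sat step φ p'
  | .conj poss negs, p =>
      (∀ φ ∈ poss, HML.sat step φ p) ∧ (∀ φ ∈ negs, ¬ HML.sat step φ p)

/-- `φ` distinguishes `p` from `q`: `p ⊨ φ` and `q ⊭ φ`. -/
def distinguishes {P : Type} {Act : Type} (step : P → Act → P → Prop)
    (φ : HML Act) (p q : P) : Prop :=
  φ.sat step p ∧ ¬ φ.sat step q

/-- Maximum (supremum) of a list of naturals, `0` for the empty list. -/
def listMax (l : List ℕ) : ℕ := l.foldr max 0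

/-- Supremum of a list of naturals after removing one maximal element
(the "other positive clauses" in the pricing). -/
def supErase (l : List ℕ) : ℕ := listMax (l.erase (listMax l))

mutual
/-- The expressiveness price `expr : HML → ℕ^6` of a formula.
Components (0-indexed): 0 — modal depth; 1 — nesting depth of conjunctions;
2 — modal depth of the deepest positive clauses; 3 — modal depth of the other
positive clauses; 4 — modal depth of negative clauses; 5 — nesting depth of
negations. -/
def HML.expr {Act : Type} : HML Act → Energy 6
  | .obs _ φ => fun k => HML.expr φ k + (if k = 0 then 1 else 0)
  | .conj poss negs =>
      let pe := exprList poss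
      let ne := exprList negs
      -- prices of the clauses (a negated clause adds 1 to component 5)
      let clauseE : List (Energy 6) :=
        pe ++ ne.map (fun v => fun k => v k + (if k = 5 then 1 else 0))
      let base : Energy 6 := fun k =>
        if k = 1 then 1 + listMax (clauseE.map (fun v => v 1))
        else if k = 2 then listMax (pe.map (fun v => v 0))
        else if k = 3 then supErase (pe.map (fun v => v 0))
        else if k = 4 then listMax (ne.map (fun v => v 0))
        else 0
      fun k => max (base k) (listMax (clauseE.map (fun v => v k)))

/-- Prices of a list of formulas. -/
def exprList {Act : Type} : List (HML Act) → List (Energy 6)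
  | [] => []
  | φ :: l => HML.expr φ :: exprList l
end

/-- The expressiveness price as an extended energy. -/
def HML.exprE {Act : Type} (φ : HML Act) : EnergyE 6 := (HML.expr φ).toE
/-! ### Strategy formulas -/

/-- A clause of an HML conjunction: a positive or a negated formula. -/
inductive HMLClause (Act : Type) : Type where
  | pos (φ : HML Act)
  | neg (φ : HML Act)

/-- The conjunction formula `⋀ l` built from a list of clauses. -/
def clausesConj {Act : Type} (l : List (HMLClause Act)) : HML Act :=
  HML.conj
    (l.filterMap fun c => match c with | .pos φ => some φ | .neg _ => none)
    (l.filterMap fun c => match c with | .neg φ => some φ | .pos _ => none)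

/-- `φ` is an observation formula `⟨a⟩…`. -/
def HML.isObs {Act : Type} : HML Act → Prop
  | .obs _ _ => True
  | _ => False

mutual
/-- Attacker strategy formulas `Strat g e φ` (for given attacker winning budgets
`Win`), at attacker positions `[p,Q]_a` and defender positions `(p,Q,Q*)_d`. -/
inductive Strat {P : Type} {Act : Type} (step : P → Act → P → Prop)
    (Win : SpecPos P → EnergyE 6 → Prop) :
    SpecPos P → EnergyE 6 → HML Act → Prop where
  | obs {p p' : P} {Q : Set P} {a : Act} {e e' : EnergyE 6} {φ : HML Act} :
      step p a p' →
      applyUpdE e uObs = some e' →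
      Win (.att p' (stepSet step Q a)) e' →
      Strat step Win (.att p' (stepSet step Q a)) e' φ →
      Strat step Win (.att p Q) e (.obs a φ)
  | conj {p : P} {Q Qs : Set P} {e e' : EnergyE 6} {φ : HML Act} :
      Qs ⊆ Q →
      applyUpdE e uConj = some e' →
      Win (.defp p (Q \ Qs) Qs) e' →
      Strat step Win (.defp p (Q \ Qs) Qs) e' φ →
      Strat step Win (.att p Q) e φ
  | defEmpty {p : P} {Q : Set P} {e e' : EnergyE 6} (hQ : Q.Finite)
      (ψ : P → HMLClause Act) :
      applyUpdE e uAnswer = some e' →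
      (∀ q, q ∈ Q → Win (.attConj p q) e') →
      (∀ q, q ∈ Q → StratClause step Win (.attConj p q) e' (ψ q)) →
      Strat step Win (.defp p Q ∅) e (clausesConj (hQ.toFinset.toList.map ψ))
  | defRevival {p : P} {Q Qs : Set P} {e e' estar : EnergyE 6} (hQ : Q.Finite)
      (ψ : P → HMLClause Act) {φstar : HML Act} :
      Qs ≠ ∅ →
      applyUpdE e uAnswer = some e' →
      (∀ q, q ∈ Q → Win (.attConj p q) e') →
      (∀ q, q ∈ Q → StratClause step Win (.attConj p q) e' (ψ q)) →
      applyUpdE e uRevival = some estar →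
      Win (.att p Qs) estar →
      Strat step Win (.att p Qs) estar φstar →
      φstar.isObs →
      Strat step Win (.defp p Q Qs) e
        (clausesConj (HMLClause.pos φstar :: hQ.toFinset.toList.map ψ))

/-- Attacker strategy clauses at attacker clause positions `[p,q]_a^∧`. -/
inductive StratClause {P : Type} {Act : Type} (step : P → Act → P → Prop)
    (Win : SpecPos P → EnergyE 6 → Prop) :
    SpecPos P → EnergyE 6 → HMLClause Act → Prop where
  | pos {p q : P} {e e' : EnergyE 6} {φ : HML Act} :
      applyUpdE e uPos = some e' →
      Win (.att p {q}) e' →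
      Strat step Win (.att p {q}) e' φ →
      φ.isObs →
      StratClause step Win (.attConj p q) e (.pos φ)
  | neg {p q : P} {e e' : EnergyE 6} {φ : HML Act} :
      p ≠ q →
      applyUpdE e uNeg = some e' →
      Win (.att q {p}) e' →
      Strat step Win (.att q {p}) e' φ →
      φ.isObs →
      StratClause step Win (.attConj p q) e (.neg φ)
end


/-- Satisfaction of a clause. -/
def satC {P Act : Type} (step : P → Act → P → Prop) : HMLClause Act → P → Prop
  | .pos φ, r => φ.sat step r
  | .neg φ, r => ¬ φ.sat step r

theorem sat_clausesConj {P Act : Type} (step : P → Act → P → Prop)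
    (l : List (HMLClause Act)) (r : P) :
    (clausesConj l).sat step r ↔ ∀ c ∈ l, satC step c r := by
  unfold clausesConj
  simp only [HML.sat]
  constructor
  · rintro ⟨hp, hn⟩ c hc
    cases c with
    | pos φ => exact hp φ (List.mem_filterMap.2 ⟨.pos φ, hc, rfl⟩)
    | neg φ => exact hn φ (List.mem_filterMap.2 ⟨.neg φ, hc, rfl⟩)
  · intro h
    constructor
    · intro φ hφ
      obtain ⟨c, hc, hm⟩ := List.mem_filterMap.1 hφ
      cases c with
      | pos ψ => cases hm; exact h _ hc
      | neg ψ => cases hm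
    · intro φ hφ
      obtain ⟨c, hc, hm⟩ := List.mem_filterMap.1 hφ
      cases c with
      | pos ψ => cases hm
      | neg ψ => cases hm; exact h _ hc

/-- Motive for `Strat`. -/
def M1 {P Act : Type} (step : P → Act → P → Prop) :
    SpecPos P → EnergyE 6 → HML Act → Prop
  | .att p Q, _, φ => φ.sat step p ∧ ∀ q ∈ Q, ¬ φ.sat step q
  | .defp p Q Qs, _, φ => φ.sat step p ∧ ∀ q ∈ Q ∪ Qs, ¬ φ.sat step q
  | .attConj _ _, _, _ => True

/-- Motive for `StratClause`. -/
def M2 {P Act : Type} (step : P → Act → P → Prop) :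
    SpecPos P → EnergyE 6 → HMLClause Act → Prop
  | .attConj p q, _, c => satC step c p ∧ ¬ satC step c q
  | _, _, _ => True

theorem strat_sound {P Act : Type} (step : P → Act → P → Prop)
    (Win : SpecPos P → EnergyE 6 → Prop) :
    ∀ g e φ, Strat step Win g e φ → M1 step g e φ := by
  have hobs : ∀ {p p' : P} {Q : Set P} {a : Act} {e e' : EnergyE 6} {φ : HML Act},
      step p a p' → applyUpdE e uObs = some e' →
      Win (SpecPos.att p' (stepSet step Q a)) e' →
      Strat step Win (SpecPos.att p' (stepSet step Q a)) e' φ →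
      M1 step (SpecPos.att p' (stepSet step Q a)) e' φ →
      M1 step (SpecPos.att p Q) e (HML.obs a φ) := by
    intro p p' Q a e e' φ hstep _ _ _ ih
    simp only [M1, HML.sat]
    refine ⟨⟨p', hstep, ih.1⟩, ?_⟩
    rintro q hq ⟨q', hs, hsat⟩
    exact ih.2 q' ⟨q, hq, hs⟩ hsat
  have hconj : ∀ {p : P} {Q Qs : Set P} {e e' : EnergyE 6} {φ : HML Act},
      Qs ⊆ Q → applyUpdE e uConj = some e' →
      Win (SpecPos.defp p (Q \ Qs) Qs) e' →
      Strat step Win (SpecPos.defp p (Q \ Qs) Qs) e' φ →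
      M1 step (SpecPos.defp p (Q \ Qs) Qs) e' φ →
      M1 step (SpecPos.att p Q) e φ := by
    intro p Q Qs e e' φ _ _ _ _ ih
    refine ⟨ih.1, fun q hq hsat => ?_⟩
    by_cases hqs : q ∈ Qs
    · exact ih.2 q (Or.inr hqs) hsat
    · exact ih.2 q (Or.inl ⟨hq, hqs⟩) hsat
  have hdefE : ∀ {p : P} {Q : Set P} {e e' : EnergyE 6} (hQ : Q.Finite)
      (ψ : P → HMLClause Act), applyUpdE e uAnswer = some e' →
      (∀ q ∈ Q, Win (SpecPos.attConj p q) e') →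
      (∀ q ∈ Q, StratClause step Win (SpecPos.attConj p q) e' (ψ q)) →
      (∀ q ∈ Q, M2 step (SpecPos.attConj p q) e' (ψ q)) →
      M1 step (SpecPos.defp p Q ∅) e (clausesConj (List.map ψ hQ.toFinset.toList)) := by
    intro p Q e e' hQ ψ _ _ _ ih
    constructor
    · rw [sat_clausesConj]
      intro c hc
      obtain ⟨q, hq, rfl⟩ := List.mem_map.1 hc
      rw [Finset.mem_toList, Set.Finite.mem_toFinset] at hq
      exact (ih q hq).1
    · intro q hq hsat
      rcases hq with hq | hq
      · rw [sat_clausesConj] at hsat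
        exact (ih q hq).2 (hsat (ψ q) (List.mem_map.2 ⟨q,
          Finset.mem_toList.2 (hQ.mem_toFinset.2 hq), rfl⟩))
      · exact absurd hq (Set.notMem_empty q)
  have hdefR : ∀ {p : P} {Q Qs : Set P} {e e' estar : EnergyE 6} (hQ : Q.Finite)
      (ψ : P → HMLClause Act) {φstar : HML Act}, Qs ≠ ∅ →
      applyUpdE e uAnswer = some e' →
      (∀ q ∈ Q, Win (SpecPos.attConj p q) e') →
      (∀ q ∈ Q, StratClause step Win (SpecPos.attConj p q) e' (ψ q)) →
      applyUpdE e uRevival = some estar →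
      Win (SpecPos.att p Qs) estar →
      Strat step Win (SpecPos.att p Qs) estar φstar →
      φstar.isObs →
      (∀ q ∈ Q, M2 step (SpecPos.attConj p q) e' (ψ q)) →
      M1 step (SpecPos.att p Qs) estar φstar →
      M1 step (SpecPos.defp p Q Qs) e
        (clausesConj (HMLClause.pos φstar :: List.map ψ hQ.toFinset.toList)) := by
    intro p Q Qs e e' estar hQ ψ φstar _ _ _ _ _ _ _ _ ih ihs
    constructor
    · rw [sat_clausesConj]
      intro c hc
      rcases List.mem_cons.1 hc with rfl | hc
      · exact ihs.1
      · obtain ⟨q, hq, rfl⟩ := List.mem_map.1 hc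
        rw [Finset.mem_toList, Set.Finite.mem_toFinset] at hq
        exact (ih q hq).1
    · intro q hq hsat
      rw [sat_clausesConj] at hsat
      rcases hq with hq | hq
      · exact (ih q hq).2 (hsat (ψ q) (List.mem_cons_of_mem _ (List.mem_map.2 ⟨q,
          Finset.mem_toList.2 (hQ.mem_toFinset.2 hq), rfl⟩)))
      · exact ihs.2 q hq (hsat (.pos _) List.mem_cons_self)
  have hpos : ∀ {p q : P} {e e' : EnergyE 6} {φ : HML Act},
      applyUpdE e uPos = some e' → Win (SpecPos.att p {q}) e' →
      Strat step Win (SpecPos.att p {q}) e' φ → φ.isObs →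
      M1 step (SpecPos.att p {q}) e' φ →
      M2 step (SpecPos.attConj p q) e (HMLClause.pos φ) := by
    intro p q e e' φ _ _ _ _ ih
    exact ⟨ih.1, fun h => ih.2 _ rfl h⟩
  have hneg : ∀ {p q : P} {e e' : EnergyE 6} {φ : HML Act}, p ≠ q →
      applyUpdE e uNeg = some e' → Win (SpecPos.att q {p}) e' →
      Strat step Win (SpecPos.att q {p}) e' φ → φ.isObs →
      M1 step (SpecPos.att q {p}) e' φ →
      M2 step (SpecPos.attConj p q) e (HMLClause.neg φ) := by
    intro p q e e' φ _ _ _ _ _ ih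
    exact ⟨fun h => ih.2 _ rfl h, fun h => h ih.1⟩
  intro g e φ h
  refine Strat.rec (motive_1 := fun g e φ _ => M1 step g e φ)
    (motive_2 := fun g e c _ => M2 step g e c) ?_ ?_ ?_ ?_ ?_ ?_ h
  · intro p p' Q a e e' φ h1 h2 h3 h4 ih
    exact hobs h1 h2 h3 h4 ih
  · intro p Q Qs e e' φ h1 h2 h3 h4 ih
    exact hconj h1 h2 h3 h4 ih
  · intro p Q e e' hQ ψ h1 h2 h3 ih
    exact hdefE hQ ψ h1 h2 h3 ih
  · intro p Q Qs e e' estar hQ ψ φstar h1 h2 h3 h4 h5 h6 h7 h8 ih2 ih1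
    exact hdefR hQ ψ h1 h2 h3 h4 h5 h6 h7 h8 ih2 ih1
  · intro p q e e' φ h1 h2 h3 h4 ih
    exact hpos h1 h2 h3 h4 ih
  · intro p q e e' φ h1 h2 h3 h4 h5 ih
    exact hneg h1 h2 h3 h4 h5 ih

/-- **Distinction soundness** (Lemma 4): every `φ ∈ Strat([p,Q]_a, e)` distinguishes
`p` from every `q ∈ Q`. -/
theorem distinction_soundness {P Act : Type} (step : P → Act → P → Prop)
    (p : P) (Q : Set P) (e : EnergyE 6) (φ : HML Act)
    (h : Strat step (AttackerWins (specGame step)) (SpecPos.att p Q) e φ) :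
    φ.sat step p ∧ ∀ q ∈ Q, ¬ φ.sat step q :=
  strat_sound step _ _ e φ h
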